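/- Let m₁, m₂, k₂ > 0 and g ∈ ℝ, let ℓ : ℝ → ℝ be smooth with ℓ(t) ≠ 0 for all t, and set ω₂ = √((m₁ + m₂)k₂/(m₁m₂)). Suppose differentiable functions Θ, P_Θ, Φ, P_Φ : ℝ → ℝ satisfy the linear normal variational system Θ' = P_Θ/(m₁ℓ²), P_Θ' = −(g m₁ ℓ + k₂ℓ²)Θ + k₂ℓ²Φ, Φ' = P_Φ/(m₂ℓ²), P_Φ' = k₂ℓ²Θ − (g m₂ ℓ + k₂ℓ²)Φ. Then Θ is four times differentiable and satisfies the fourth-order equation 0 = Θ'''' + 4(ℓ'/ℓ)Θ''' + (2(g + 2ℓ'')/ℓ + ω₂²)Θ'' + 2((g − ℓ'')ℓ'/ℓ² + ω₂²ℓ'/ℓ + ℓ'''/ℓ)Θ' + g((g − ℓ'')/ℓ² + ω₂²/ℓ)Θ. -/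

import Mathlib

open scoped ContDiff

set_option maxHeartbeats 4000000 in
theorem normal_variational_system_gives_fourth_order_equation
    (m₁ m₂ k₂ g : ℝ) (hm₁ : 0 < m₁) (hm₂ : 0 < m₂) (hk₂ : 0 < k₂)
    (ℓ : ℝ → ℝ) (hℓ : ContDiff ℝ (⊤ : ℕ∞) ℓ) (hℓ0 : ∀ t, ℓ t ≠ 0)
    (ω₂ : ℝ) (hω₂ : ω₂ = Real.sqrt ((m₁ + m₂) * k₂ / (m₁ * m₂)))
    (Θ PΘ Φ PΦ : ℝ → ℝ)
    (hΘd : Differentiable ℝ Θ) (hPΘd : Differentiable ℝ PΘ)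
    (hΦd : Differentiable ℝ Φ) (hPΦd : Differentiable ℝ PΦ)
    (hΘ : ∀ t, deriv Θ t = PΘ t / (m₁ * ℓ t ^ 2))
    (hPΘ : ∀ t, deriv PΘ t = -(g * m₁ * ℓ t + k₂ * ℓ t ^ 2) * Θ t + k₂ * ℓ t ^ 2 * Φ t)
    (hΦ : ∀ t, deriv Φ t = PΦ t / (m₂ * ℓ t ^ 2))
    (hPΦ : ∀ t, deriv PΦ t = k₂ * ℓ t ^ 2 * Θ t - (g * m₂ * ℓ t + k₂ * ℓ t ^ 2) * Φ t) :
    (∀ n ≤ 3, Differentiable ℝ (iteratedDeriv n Θ)) ∧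
    ∀ t : ℝ,
      0 = iteratedDeriv 4 Θ t
        + 4 * (deriv ℓ t / ℓ t) * iteratedDeriv 3 Θ t
        + (2 * (g + 2 * iteratedDeriv 2 ℓ t) / ℓ t + ω₂ ^ 2) * iteratedDeriv 2 Θ t
        + 2 * ((g - iteratedDeriv 2 ℓ t) * deriv ℓ t / (ℓ t) ^ 2
            + ω₂ ^ 2 * deriv ℓ t / ℓ t + iteratedDeriv 3 ℓ t / ℓ t) * deriv Θ t
        + g * ((g - iteratedDeriv 2 ℓ t) / (ℓ t) ^ 2 + ω₂ ^ 2 / ℓ t) * Θ t := by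
  have hm₁' : m₁ ≠ 0 := ne_of_gt hm₁
  have hm₂' : m₂ ≠ 0 := ne_of_gt hm₂
  have hden₁ : ∀ t, m₁ * ℓ t ^ 2 ≠ 0 := fun t => mul_ne_zero hm₁' (pow_ne_zero 2 (hℓ0 t))
  have hden₂ : ∀ t, m₂ * ℓ t ^ 2 ≠ 0 := fun t => mul_ne_zero hm₂' (pow_ne_zero 2 (hℓ0 t))
  have hℓi : ContDiff ℝ ∞ ℓ := hℓ.of_le (by simp)
  have dℓ : Differentiable ℝ ℓ := hℓ.differentiable (by simp)
  have sℓ1 : ContDiff ℝ ∞ (deriv ℓ) := (contDiff_infty_iff_deriv.mp hℓi).2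
  have dℓ1 : Differentiable ℝ (deriv ℓ) := (contDiff_infty_iff_deriv.mp sℓ1).1
  have sℓ2 : ContDiff ℝ ∞ (deriv (deriv ℓ)) := (contDiff_infty_iff_deriv.mp sℓ1).2
  have dℓ2 : Differentiable ℝ (deriv (deriv ℓ)) := (contDiff_infty_iff_deriv.mp sℓ2).1
  -- bootstrap smoothness of the solution
  have key : ∀ n : ℕ, ContDiff ℝ n Θ ∧ ContDiff ℝ n PΘ ∧ ContDiff ℝ n Φ ∧ ContDiff ℝ n PΦ := by
    intro n
    induction n with
    | zero =>
      exact ⟨contDiff_zero.mpr hΘd.continuous, contDiff_zero.mpr hPΘd.continuous,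
        contDiff_zero.mpr hΦd.continuous, contDiff_zero.mpr hPΦd.continuous⟩
    | succ n ih =>
      obtain ⟨ihΘ, ihPΘ, ihΦ, ihPΦ⟩ := ih
      have hℓn : ContDiff ℝ n ℓ := hℓ.of_le (by exact_mod_cast le_top)
      have hcast : ((n + 1 : ℕ) : WithTop ℕ∞) = (n : WithTop ℕ∞) + 1 := by push_cast; ring
      have hne : ¬((n : WithTop ℕ∞) = ω) := by simp
      refine ⟨?_, ?_, ?_, ?_⟩
      · rw [hcast, contDiff_succ_iff_deriv]
        refine ⟨hΘd, fun h => absurd h hne, ?_⟩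
        rw [funext hΘ]
        exact ihPΘ.div (contDiff_const.mul (hℓn.pow 2)) hden₁
      · rw [hcast, contDiff_succ_iff_deriv]
        refine ⟨hPΘd, fun h => absurd h hne, ?_⟩
        rw [funext hPΘ]
        exact (((contDiff_const.mul hℓn).add (contDiff_const.mul (hℓn.pow 2))).neg.mul ihΘ).add
          ((contDiff_const.mul (hℓn.pow 2)).mul ihΦ)
      · rw [hcast, contDiff_succ_iff_deriv]
        refine ⟨hΦd, fun h => absurd h hne, ?_⟩
        rw [funext hΦ]
        exact ihPΦ.div (contDiff_const.mul (hℓn.pow 2)) hden₂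
      · rw [hcast, contDiff_succ_iff_deriv]
        refine ⟨hPΦd, fun h => absurd h hne, ?_⟩
        rw [funext hPΦ]
        exact ((contDiff_const.mul (hℓn.pow 2)).mul ihΘ).sub
          (((contDiff_const.mul hℓn).add (contDiff_const.mul (hℓn.pow 2))).mul ihΦ)
  have sΘ : ContDiff ℝ ∞ Θ := contDiff_infty.mpr fun n => (key n).1
  have sΦ : ContDiff ℝ ∞ Φ := contDiff_infty.mpr fun n => (key n).2.2.1
  have dΘ1 : Differentiable ℝ (deriv Θ) :=
    (contDiff_infty_iff_deriv.mp (contDiff_infty_iff_deriv.mp sΘ).2).1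
  have dΦ1 : Differentiable ℝ (deriv Φ) :=
    (contDiff_infty_iff_deriv.mp (contDiff_infty_iff_deriv.mp sΦ).2).1
  -- second derivative of Θ
  have hA : ∀ t, deriv (deriv Θ) t =
      -(g / ℓ t + k₂ / m₁) * Θ t + k₂ / m₁ * Φ t - 2 * (deriv ℓ t / ℓ t) * deriv Θ t := by
    intro t
    rw [show deriv Θ = (fun s => PΘ s / (m₁ * ℓ s ^ 2)) from funext hΘ]
    have H : HasDerivAt (fun s => PΘ s / (m₁ * ℓ s ^ 2)) _ t :=
      (hPΘd t).hasDerivAt.div (((dℓ t).hasDerivAt.pow 2).const_mul m₁) (hden₁ t)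
    rw [H.deriv, hPΘ t]
    field_simp [hm₁', hℓ0 t]
    ring
  -- second derivative of Φ
  have hB : ∀ t, deriv (deriv Φ) t =
      k₂ / m₂ * Θ t - (g / ℓ t + k₂ / m₂) * Φ t - 2 * (deriv ℓ t / ℓ t) * deriv Φ t := by
    intro t
    rw [show deriv Φ = (fun s => PΦ s / (m₂ * ℓ s ^ 2)) from funext hΦ]
    have H : HasDerivAt (fun s => PΦ s / (m₂ * ℓ s ^ 2)) _ t :=
      (hPΦd t).hasDerivAt.div (((dℓ t).hasDerivAt.pow 2).const_mul m₂) (hden₂ t)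
    rw [H.deriv, hPΦ t]
    field_simp [hm₂', hℓ0 t]
    ring
  -- third derivative of Θ
  have hC : ∀ t, deriv (deriv (deriv Θ)) t =
      g * deriv ℓ t / ℓ t ^ 2 * Θ t - (g / ℓ t + k₂ / m₁) * deriv Θ t
        + k₂ / m₁ * deriv Φ t
        - 2 * ((deriv (deriv ℓ) t * ℓ t - deriv ℓ t ^ 2) / ℓ t ^ 2) * deriv Θ t
        - 2 * (deriv ℓ t / ℓ t) *
          (-(g / ℓ t + k₂ / m₁) * Θ t + k₂ / m₁ * Φ t - 2 * (deriv ℓ t / ℓ t) * deriv Θ t) := by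
    intro t
    rw [show deriv (deriv Θ) =
        (fun s => -(g / ℓ s + k₂ / m₁) * Θ s + k₂ / m₁ * Φ s
          - 2 * (deriv ℓ s / ℓ s) * deriv Θ s) from funext hA]
    have H : HasDerivAt (fun s => -(g / ℓ s + k₂ / m₁) * Θ s + k₂ / m₁ * Φ s
        - 2 * (deriv ℓ s / ℓ s) * deriv Θ s) _ t :=
      (((((hasDerivAt_const t g).div (dℓ t).hasDerivAt (hℓ0 t)).add_const
            (k₂ / m₁)).neg.mul (hΘd t).hasDerivAt).add
          ((hΦd t).hasDerivAt.const_mul (k₂ / m₁))).sub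
        ((((dℓ1 t).hasDerivAt.div (dℓ t).hasDerivAt (hℓ0 t)).const_mul 2).mul
          (dΘ1 t).hasDerivAt)
    rw [H.deriv, hA t]
    simp only [Pi.div_apply, Pi.add_apply, Pi.neg_apply, Pi.mul_apply, Pi.sub_apply, Pi.pow_apply]
    field_simp [hℓ0 t]
    ring
  constructor
  · intro n _
    rw [iteratedDeriv_eq_iterate]
    exact (sΘ.iterate_deriv n).differentiable (by simp)
  intro t
  have hw : ω₂ ^ 2 = (m₁ + m₂) * k₂ / (m₁ * m₂) := by
    rw [hω₂]; exact Real.sq_sqrt (by positivity)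
  have e2θ : iteratedDeriv 2 Θ = deriv (deriv Θ) := by
    rw [show (2 : ℕ) = 1 + 1 from rfl, iteratedDeriv_succ, iteratedDeriv_one]
  have e3θ : iteratedDeriv 3 Θ = deriv (deriv (deriv Θ)) := by
    rw [show (3 : ℕ) = 1 + 1 + 1 from rfl, iteratedDeriv_succ, iteratedDeriv_succ,
      iteratedDeriv_one]
  have e4θ : iteratedDeriv 4 Θ = deriv (deriv (deriv (deriv Θ))) := by
    rw [show (4 : ℕ) = 1 + 1 + 1 + 1 from rfl, iteratedDeriv_succ, iteratedDeriv_succ,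
      iteratedDeriv_succ, iteratedDeriv_one]
  have e2ℓ : iteratedDeriv 2 ℓ = deriv (deriv ℓ) := by
    rw [show (2 : ℕ) = 1 + 1 from rfl, iteratedDeriv_succ, iteratedDeriv_one]
  have e3ℓ : iteratedDeriv 3 ℓ = deriv (deriv (deriv ℓ)) := by
    rw [show (3 : ℕ) = 1 + 1 + 1 from rfl, iteratedDeriv_succ, iteratedDeriv_succ,
      iteratedDeriv_one]
  rw [e2θ, e3θ, e4θ, e2ℓ, e3ℓ, hw]
  rw [show deriv (deriv (deriv Θ)) =
      (fun s => g * deriv ℓ s / ℓ s ^ 2 * Θ s - (g / ℓ s + k₂ / m₁) * deriv Θ s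
        + k₂ / m₁ * deriv Φ s
        - 2 * ((deriv (deriv ℓ) s * ℓ s - deriv ℓ s ^ 2) / ℓ s ^ 2) * deriv Θ s
        - 2 * (deriv ℓ s / ℓ s) *
          (-(g / ℓ s + k₂ / m₁) * Θ s + k₂ / m₁ * Φ s - 2 * (deriv ℓ s / ℓ s) * deriv Θ s))
      from funext hC]
  have HA : HasDerivAt (fun s => -(g / ℓ s + k₂ / m₁) * Θ s + k₂ / m₁ * Φ s
      - 2 * (deriv ℓ s / ℓ s) * deriv Θ s) _ t :=
    (((((hasDerivAt_const t g).div (dℓ t).hasDerivAt (hℓ0 t)).add_const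
          (k₂ / m₁)).neg.mul (hΘd t).hasDerivAt).add
        ((hΦd t).hasDerivAt.const_mul (k₂ / m₁))).sub
      ((((dℓ1 t).hasDerivAt.div (dℓ t).hasDerivAt (hℓ0 t)).const_mul 2).mul
        (dΘ1 t).hasDerivAt)
  have q1 : HasDerivAt (fun s => g * deriv ℓ s / ℓ s ^ 2 * Θ s) _ t :=
    (((dℓ1 t).hasDerivAt.const_mul g).div ((dℓ t).hasDerivAt.pow 2)
      (pow_ne_zero 2 (hℓ0 t))).mul (hΘd t).hasDerivAt
  have q2 : HasDerivAt (fun s => (g / ℓ s + k₂ / m₁) * deriv Θ s) _ t :=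
    (((hasDerivAt_const t g).div (dℓ t).hasDerivAt (hℓ0 t)).add_const (k₂ / m₁)).mul
      (dΘ1 t).hasDerivAt
  have q3 : HasDerivAt (fun s => k₂ / m₁ * deriv Φ s) _ t :=
    (dΦ1 t).hasDerivAt.const_mul (k₂ / m₁)
  have q4 : HasDerivAt
      (fun s => 2 * ((deriv (deriv ℓ) s * ℓ s - deriv ℓ s ^ 2) / ℓ s ^ 2) * deriv Θ s) _ t :=
    (((((dℓ2 t).hasDerivAt.mul (dℓ t).hasDerivAt).sub ((dℓ1 t).hasDerivAt.pow 2)).div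
      ((dℓ t).hasDerivAt.pow 2) (pow_ne_zero 2 (hℓ0 t))).const_mul 2).mul (dΘ1 t).hasDerivAt
  have q5 : HasDerivAt (fun s => 2 * (deriv ℓ s / ℓ s) *
      (-(g / ℓ s + k₂ / m₁) * Θ s + k₂ / m₁ * Φ s - 2 * (deriv ℓ s / ℓ s) * deriv Θ s)) _ t :=
    (((dℓ1 t).hasDerivAt.div (dℓ t).hasDerivAt (hℓ0 t)).const_mul 2).mul HA
  have H4 : HasDerivAt (fun s => g * deriv ℓ s / ℓ s ^ 2 * Θ s - (g / ℓ s + k₂ / m₁) * deriv Θ s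
      + k₂ / m₁ * deriv Φ s
      - 2 * ((deriv (deriv ℓ) s * ℓ s - deriv ℓ s ^ 2) / ℓ s ^ 2) * deriv Θ s
      - 2 * (deriv ℓ s / ℓ s) *
        (-(g / ℓ s + k₂ / m₁) * Θ s + k₂ / m₁ * Φ s - 2 * (deriv ℓ s / ℓ s) * deriv Θ s)) _ t :=
    (((q1.sub q2).add q3).sub q4).sub q5
  rw [H4.deriv, hA t, hB t]
  beta_reduce
  simp only [Pi.div_apply, Pi.add_apply, Pi.neg_apply, Pi.mul_apply, Pi.sub_apply, Pi.pow_apply]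
  have hl : ℓ t ≠ 0 := hℓ0 t
  generalize hg1 : ℓ t = l at hl ⊢
  generalize hg2 : deriv ℓ t = l1
  generalize hg3 : deriv (deriv ℓ) t = l2
  generalize hg4 : deriv (deriv (deriv ℓ)) t = l3
  generalize hg5 : Θ t = θ
  generalize hg6 : deriv Θ t = θ1
  generalize hg7 : Φ t = φ
  generalize hg8 : deriv Φ t = φ1
  field_simp
  ring
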